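/- In a relative H*-algebra (X,m), if g and h are both pseudoinverses of f ∈ X, then f·g = f·h and g·f = h·f. (The source and target relations s(f) = f*·f and t(f) = f·f* are well-defined functions, independent of the chosen pseudoinverse.) -/

import Mathlib

/-!
`f·g` and `f·h` are idempotents, each a left unit of the other, and condition (H) forces
two such idempotents to coincide, as in an inverse semigroup. The claim about `g·f` and `h·f`
is the same statement for the opposite multiplication `flip m`.
-/

/-- `m h g f` means `h·g = f`: the product of `h` and `g` is defined and equals `f`. -/
def CondM {X : Type*} (m : X → X → X → Prop) : Prop :=
  (∀ h g f f', m h g f → m h g f' → f = f') ∧ (∀ f, ∃ h g, m h g f)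

def CondA {X : Type*} (m : X → X → X → Prop) : Prop :=
  ∀ f g h x, (∃ k, m f g k ∧ m k h x) ↔ (∃ l, m g h l ∧ m f l x)

/-- Condition (H): `star` is an involution on subsets of `X` such that
`x·a = y` for some `a ∈ A` iff `y·a' = x` for some `a' ∈ A*`, and symmetrically. -/
def CondH {X : Type*} (m : X → X → X → Prop) (star : Set X → Set X) : Prop :=
  (∀ A, star (star A) = A) ∧
  ∀ (A : Set X) (x y : X),
    ((∃ a ∈ A, m x a y) ↔ (∃ a' ∈ star A, m y a' x)) ∧
    ((∃ a ∈ A, m a x y) ↔ (∃ a' ∈ star A, m a' y x))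

/-- A relative H*-algebra: a relation satisfying (M), (A) and (H). -/
def RelHstar {X : Type*} (m : X → X → X → Prop) (star : Set X → Set X) : Prop :=
  CondM m ∧ CondA m ∧ CondH m star

/-- `f'` is a pseudoinverse of `f`: `f·f'·f = f` and `f'·f·f' = f'`. -/
def IsPseudoinverse {X : Type*} (m : X → X → X → Prop) (f f' : X) : Prop :=
  (∃ p, m f f' p ∧ m p f f) ∧ (∃ q, m f' f q ∧ m q f' f')

section

variable {X : Type*} {m : X → X → X → Prop} {star : Set X → Set X}

theorem CondM.mul_iff_mul_of_mul_eq (hM : CondM m) {a b a' b' c : X}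
    (h : m a b c) (h' : m a' b' c) (y : X) : m a b y ↔ m a' b' y :=
  ⟨fun hy => hM.1 _ _ _ _ h hy ▸ h', fun hy => hM.1 _ _ _ _ h' hy ▸ h⟩

theorem reassoc_right (hM : CondM m) (hA : CondA m) {f g h k l x : X}
    (hk : m f g k) (hx : m k h x) (hl : m g h l) : m f l x := by
  obtain ⟨l', hl', hx'⟩ := (hA f g h x).mp ⟨k, hk, hx⟩
  rwa [hM.1 _ _ _ _ hl' hl] at hx'

theorem reassoc_left (hM : CondM m) (hA : CondA m) {f g h k l x : X}
    (hl : m g h l) (hx : m f l x) (hk : m f g k) : m k h x := by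
  obtain ⟨k', hk', hx'⟩ := (hA f g h x).mpr ⟨l, hl, hx⟩
  rwa [hM.1 _ _ _ _ hk' hk] at hx'

theorem CondH.exists_mem_star_of_mul_right (hH : CondH m star) {a x y : X}
    (h : m x a y) : ∃ a' ∈ star {a}, m y a' x :=
  (hH.2 {a} x y).1.mp ⟨a, rfl, h⟩

theorem CondH.exists_mem_star_of_mul_left (hH : CondH m star) {a x y : X}
    (h : m a x y) : ∃ a' ∈ star {a}, m a' y x :=
  (hH.2 {a} x y).2.mp ⟨a, rfl, h⟩

theorem CondH.mul_right_of_mem_star (hH : CondH m star) {a a' x y : X}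
    (ha' : a' ∈ star {a}) (h : m y a' x) : m x a y := by
  simpa [hH.1] using (hH.2 (star {a}) y x).1.mp ⟨a', ha', h⟩

theorem CondH.mul_left_of_mem_star (hH : CondH m star) {a a' x y : X}
    (ha' : a' ∈ star {a}) (h : m a' y x) : m a x y := by
  simpa [hH.1] using (hH.2 (star {a}) y x).2.mp ⟨a', ha', h⟩

theorem RelHstar.flip (hm : RelHstar m star) : RelHstar (flip m) star :=
  ⟨⟨fun _ _ _ _ h h' => hm.1.1 _ _ _ _ h h',
      fun f => let ⟨h, g, hhg⟩ := hm.1.2 f; ⟨g, h, hhg⟩⟩,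
    fun f g h x => (hm.2.1 h g f x).symm,
    hm.2.2.1, fun A x y => ⟨(hm.2.2.2 A x y).2, (hm.2.2.2 A x y).1⟩⟩

theorem RelHstar.eq_of_mul_eq_of_mul_eq (hm : RelHstar m star) {p p' : X}
    (hp'p : m p' p p) (hpp' : m p p' p') (hp'p' : m p' p' p') : p = p' := by
  obtain ⟨hM, hA, hH⟩ := hm
  obtain ⟨a, ha, hpa⟩ := hH.exists_mem_star_of_mul_right hp'p
  obtain ⟨c, hc, hcp'⟩ := hH.exists_mem_star_of_mul_left hpa
  obtain ⟨d, hd, had⟩ := hH.exists_mem_star_of_mul_right hcp'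
  have hpc : m p c d := hH.mul_left_of_mem_star ha had
  have hdp : m d p p := hH.mul_right_of_mem_star hc hpc
  have hdd : m d d d := reassoc_right hM hA hdp hpc hpc
  have hcd : m c d c := reassoc_left hM hA hdd had had
  have hcp'c : m c p' c := hH.mul_right_of_mem_star hd hcd
  obtain rfl : a = c := hM.1 _ _ _ _ hcp' hcp'c
  obtain rfl : d = p' := hM.1 _ _ _ _ hpc hpa
  exact hM.1 _ _ _ _ (hH.mul_right_of_mem_star hd hpp') hp'p'

theorem RelHstar.eq_of_mul_eq_of_mul_left_eq (hm : RelHstar m star) {f g h p p' : X}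
    (hfg : m f g p) (hpf : m p f f) (hfh : m f h p') (hp'f : m p' f f) : p = p' :=
  hm.eq_of_mul_eq_of_mul_eq (reassoc_right hm.1 hm.2.1 hp'f hfg hfg)
    (reassoc_right hm.1 hm.2.1 hpf hfh hfh) (reassoc_right hm.1 hm.2.1 hp'f hfh hfh)

end

theorem stmt9 {X : Type*} (m : X → X → X → Prop) (star : Set X → Set X)
    (hstar : RelHstar m star) (f g h : X)
    (hg : IsPseudoinverse m f g) (hh : IsPseudoinverse m f h) :
    (∀ y, m f g y ↔ m f h y) ∧ (∀ y, m g f y ↔ m h f y) := by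
  obtain ⟨⟨p, hfg, hpf⟩, q, hgf, -⟩ := hg
  obtain ⟨⟨p', hfh, hp'f⟩, q', hhf, -⟩ := hh
  have hfq : m f q f := reassoc_right hstar.1 hstar.2.1 hfg hpf hgf
  have hfq' : m f q' f := reassoc_right hstar.1 hstar.2.1 hfh hp'f hhf
  obtain rfl : p = p' := hstar.eq_of_mul_eq_of_mul_left_eq hfg hpf hfh hp'f
  obtain rfl : q = q' := hstar.flip.eq_of_mul_eq_of_mul_left_eq hgf hfq hhf hfq'
  exact ⟨hstar.1.mul_iff_mul_of_mul_eq hfg hfh, hstar.1.mul_iff_mul_of_mul_eq hgf hhf⟩
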